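/- arXiv:1107.5359 — 2 statements merged into one kernel-verified Lean document; each statement's English description precedes it below -/
import Mathlib

section
/- Let G* be a graph of maximum spectral radius among connected graphs on n vertices with connectivity at most k and minimum degree at least k, where k+2 ≤ n, and let S be a vertex cut of G* of size k. Then G* − S has exactly two connected components. -/
open Finset Module.End

noncomputable def specRad {n : ℕ} (G : SimpleGraph (Fin n)) : ℝ :=
  letI : DecidableRel G.Adj := Classical.decRel _
  sSup (spectrum ℝ (G.adjMatrix ℝ))

noncomputable def adjMat {n : ℕ} (G : SimpleGraph (Fin n)) : Matrix (Fin n) (Fin n) ℝ :=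
  letI : DecidableRel G.Adj := Classical.decRel _
  G.adjMatrix ℝ

noncomputable def minDeg {n : ℕ} (G : SimpleGraph (Fin n)) : ℕ :=
  letI : DecidableRel G.Adj := Classical.decRel _
  G.minDegree

/-- `x` is a Perron vector of `G`: a positive unit eigenvector for the spectral radius. -/
def IsPerronVector {n : ℕ} (G : SimpleGraph (Fin n)) (x : Fin n → ℝ) : Prop :=
  (∀ i, 0 < x i) ∧ (∑ i, x i ^ 2 = 1) ∧ (adjMat G).mulVec x = specRad G • x

/-- Removing the vertex set `S` disconnects `G`. -/
def Disconnects {n : ℕ} (G : SimpleGraph (Fin n)) (S : Finset (Fin n)) : Prop :=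
  ¬ (G.induce ((↑(Sᶜ) : Set (Fin n)))).Preconnected

/-- `G` is `m`-connected: `G` is the complete graph on `m+1` vertices, or `G` has at least
`m+2` vertices and no vertex cut of size at most `m-1`. -/
def IsKConnected {n : ℕ} (G : SimpleGraph (Fin n)) (m : ℕ) : Prop :=
  (n = m + 1 ∧ G = ⊤) ∨
    (m + 2 ≤ n ∧ ∀ S : Finset (Fin n), S.card ≤ m - 1 → ¬ Disconnects G S)

/-- The graph `K_k + (K_{δ-k+1} ∪ K_{n-δ-1})`: vertices `0,…,k-1` are joined to everything,
vertices `k,…,δ` form one clique and vertices `δ+1,…,n-1` the other. -/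
def Gkdn (k δ n : ℕ) : SimpleGraph (Fin n) where
  Adj a b := a ≠ b ∧ ((a : ℕ) < k ∨ (b : ℕ) < k ∨ ((a : ℕ) ≤ δ ∧ (b : ℕ) ≤ δ) ∨
    (δ < (a : ℕ) ∧ δ < (b : ℕ)))
  symm := ⟨by intro a b h; exact ⟨h.1.symm, by tauto⟩⟩
  loopless := ⟨by intro a h; exact h.1 rfl⟩

section Analysis
variable {n : ℕ}

lemma adjMat_of_adj {G : SimpleGraph (Fin n)} {i j : Fin n} (h : G.Adj i j) :
    adjMat G i j = 1 := by
  unfold adjMat; rw [SimpleGraph.adjMatrix_apply, if_pos h]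

lemma adjMat_of_not_adj {G : SimpleGraph (Fin n)} {i j : Fin n} (h : ¬ G.Adj i j) :
    adjMat G i j = 0 := by
  unfold adjMat; rw [SimpleGraph.adjMatrix_apply, if_neg h]

lemma adjMat_nonneg (G : SimpleGraph (Fin n)) (i j : Fin n) : 0 ≤ adjMat G i j := by
  by_cases h : G.Adj i j
  · rw [adjMat_of_adj h]; norm_num
  · rw [adjMat_of_not_adj h]

lemma adjMat_le_of_le {G G' : SimpleGraph (Fin n)} (h : G ≤ G') (i j : Fin n) :
    adjMat G i j ≤ adjMat G' i j := by
  by_cases ha : G.Adj i j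
  · rw [adjMat_of_adj ha, adjMat_of_adj (h ha)]
  · rw [adjMat_of_not_adj ha]; exact adjMat_nonneg _ _ _

lemma specRad_def (G : SimpleGraph (Fin n)) : specRad G = sSup (spectrum ℝ (adjMat G)) := rfl

lemma adjMat_isHermitian (G : SimpleGraph (Fin n)) : (adjMat G).IsHermitian := by
  unfold adjMat
  rw [Matrix.IsHermitian, Matrix.conjTranspose_eq_transpose_of_trivial,
    SimpleGraph.transpose_adjMatrix]

noncomputable def TE {n : ℕ} (G : SimpleGraph (Fin n)) :
    EuclideanSpace ℝ (Fin n) →ₗ[ℝ] EuclideanSpace ℝ (Fin n) :=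
  Matrix.toEuclideanLin (adjMat G)

lemma TE_symm (G : SimpleGraph (Fin n)) : (TE G).IsSymmetric :=
  Matrix.isHermitian_iff_isSymmetric.1 (adjMat_isHermitian G)

lemma TE_apply (G : SimpleGraph (Fin n)) (x : EuclideanSpace ℝ (Fin n)) (i : Fin n) :
    TE G x i = ∑ j, adjMat G i j * x j := by
  simp [TE, Matrix.toEuclideanLin_apply, Matrix.mulVec, dotProduct]

lemma inner_TE (G : SimpleGraph (Fin n)) (x : EuclideanSpace ℝ (Fin n)) :
    (inner ℝ (TE G x) x : ℝ) = ∑ i, (∑ j, adjMat G i j * x j) * x i := by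
  rw [PiLp.inner_apply]
  refine Finset.sum_congr rfl fun i _ => ?_
  rw [TE_apply]
  simp [mul_comm]

lemma norm_sq_E (x : EuclideanSpace ℝ (Fin n)) : ‖x‖ ^ 2 = ∑ i, x i ^ 2 := by
  rw [← real_inner_self_eq_norm_sq, PiLp.inner_apply]
  simp [sq]

variable (T : EuclideanSpace ℝ (Fin n) →ₗ[ℝ] EuclideanSpace ℝ (Fin n))

noncomputable def rayl (x : EuclideanSpace ℝ (Fin n)) : ℝ :=
  (inner ℝ (T x) x : ℝ) / ‖x‖ ^ 2

lemma rayl_bdd : BddAbove (Set.range fun x : {x : EuclideanSpace ℝ (Fin n) // x ≠ 0} =>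
    rayl T x.1) := by
  refine ⟨‖LinearMap.toContinuousLinearMap T‖, ?_⟩
  rintro s ⟨⟨x, hx⟩, rfl⟩
  have hx2 : (0:ℝ) < ‖x‖ ^ 2 := pow_pos (norm_pos_iff.2 hx) 2
  simp only [rayl]
  rw [div_le_iff₀ hx2]
  calc (inner ℝ (T x) x : ℝ) ≤ ‖T x‖ * ‖x‖ := real_inner_le_norm _ _
    _ ≤ (‖LinearMap.toContinuousLinearMap T‖ * ‖x‖) * ‖x‖ := by
        have := (LinearMap.toContinuousLinearMap T).le_opNorm x
        rw [LinearMap.coe_toContinuousLinearMap'] at this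
        nlinarith [norm_nonneg x, norm_nonneg (T x)]
    _ = ‖LinearMap.toContinuousLinearMap T‖ * ‖x‖ ^ 2 := by ring

lemma rayl_eigen {μ : ℝ} {x : EuclideanSpace ℝ (Fin n)} (hx : x ≠ 0)
    (h : T x = μ • x) : rayl T x = μ := by
  have hx2 : (0:ℝ) < ‖x‖ ^ 2 := pow_pos (norm_pos_iff.2 hx) 2
  simp only [rayl]
  rw [h, real_inner_smul_left, real_inner_self_eq_norm_sq, mul_div_assoc,
    div_self hx2.ne', mul_one]

lemma nontrivialE [Nonempty (Fin n)] : Nontrivial (EuclideanSpace ℝ (Fin n)) := by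
  refine ⟨0, WithLp.toLp 2 (fun _ => 1 : Fin n → ℝ), fun h => ?_⟩
  have := congrArg (fun z : EuclideanSpace ℝ (Fin n) => z (Classical.arbitrary (Fin n))) h
  simp at this

lemma isGreatest_rayl [Nonempty (Fin n)] (hsym : T.IsSymmetric) :
    IsGreatest (spectrum ℝ T) (⨆ x : {x : EuclideanSpace ℝ (Fin n) // x ≠ 0}, rayl T x.1) := by
  haveI := nontrivialE (n := n)
  constructor
  · have := hsym.hasEigenvalue_iSup_of_finiteDimensional
    have heq : (⨆ x : {x : EuclideanSpace ℝ (Fin n) // x ≠ 0},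
        RCLike.re (inner ℝ (T x.1) x.1 : ℝ) / ‖x.1‖ ^ 2)
        = ⨆ x : {x : EuclideanSpace ℝ (Fin n) // x ≠ 0}, rayl T x.1 := by
      refine iSup_congr fun x => ?_; simp only [rayl]; norm_num
    rw [heq] at this
    exact this.mem_spectrum
  · intro μ hμ
    have hEV : HasEigenvalue T μ := hasEigenvalue_iff_mem_spectrum.2 hμ
    obtain ⟨x, hmem, hx0⟩ := hEV.exists_hasEigenvector
    have hTx : T x = μ • x := mem_eigenspace_iff.1 hmem
    have : rayl T x = μ := rayl_eigen T hx0 hTx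
    rw [← this]
    exact le_ciSup (rayl_bdd T) ⟨x, hx0⟩

lemma spectrum_adjMat (G : SimpleGraph (Fin n)) :
    spectrum ℝ (adjMat G) = spectrum ℝ (TE G) :=
  (Matrix.spectrum_toEuclideanLin (A := adjMat G)).symm

lemma specRad_eq_iSup [Nonempty (Fin n)] (G : SimpleGraph (Fin n)) :
    specRad G = ⨆ x : {x : EuclideanSpace ℝ (Fin n) // x ≠ 0}, rayl (TE G) x.1 := by
  rw [specRad_def, spectrum_adjMat]
  exact (isGreatest_rayl _ (TE_symm G)).csSup_eq

lemma quad_le_specRad [Nonempty (Fin n)] (G : SimpleGraph (Fin n))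
    (x : EuclideanSpace ℝ (Fin n)) (hx : ‖x‖ = 1) :
    ∑ i, (∑ j, adjMat G i j * x j) * x i ≤ specRad G := by
  have hx0 : x ≠ 0 := by intro h; rw [h] at hx; simp at hx
  rw [← inner_TE, specRad_eq_iSup]
  have : (inner ℝ (TE G x) x : ℝ) = rayl (TE G) x := by
    simp only [rayl, hx]; norm_num
  rw [this]
  exact le_ciSup (rayl_bdd _) ⟨x, hx0⟩
end Analysis

section Perron
variable {n : ℕ}

lemma exists_perron [Nonempty (Fin n)] (G : SimpleGraph (Fin n)) :
    ∃ y : EuclideanSpace ℝ (Fin n), (∀ i, 0 ≤ y i) ∧ ‖y‖ = 1 ∧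
      TE G y = specRad G • y := by
  haveI := nontrivialE (n := n)
  have hEV : HasEigenvalue (TE G) (specRad G) := by
    rw [specRad_eq_iSup]
    exact hasEigenvalue_iff_mem_spectrum.2 (isGreatest_rayl _ (TE_symm G)).1
  obtain ⟨x, hmem, hx0⟩ := hEV.exists_hasEigenvector
  have hTx : TE G x = specRad G • x := mem_eigenspace_iff.1 hmem
  set u : EuclideanSpace ℝ (Fin n) := ‖x‖⁻¹ • x with hu
  have hxn : ‖x‖ ≠ 0 := norm_ne_zero_iff.2 hx0
  have hnu : ‖u‖ = 1 := by
    rw [hu, norm_smul, norm_inv, norm_norm, inv_mul_cancel₀ hxn]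
  have hTu : TE G u = specRad G • u := by
    rw [hu, map_smul, hTx, smul_comm]
  -- the absolute-value vector
  set y : EuclideanSpace ℝ (Fin n) := (WithLp.equiv 2 (Fin n → ℝ)).symm (fun i => |u i|) with hy
  have hyi : ∀ i, y i = |u i| := fun i => rfl
  have hny : ‖y‖ = 1 := by
    have h2 : ‖y‖ ^ 2 = 1 := by
      rw [norm_sq_E]
      simp only [hyi, sq_abs]
      rw [← norm_sq_E, hnu]; norm_num
    have := norm_nonneg y
    nlinarith
  have hy0 : y ≠ 0 := by intro h; rw [h] at hny; simp at hny
  -- quadratic form values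
  have hqu : (inner ℝ (TE G u) u : ℝ) = specRad G := by
    rw [hTu, real_inner_smul_left, real_inner_self_eq_norm_sq, hnu]; norm_num
  have hle : (inner ℝ (TE G u) u : ℝ) ≤ (inner ℝ (TE G y) y : ℝ) := by
    rw [inner_TE, inner_TE]
    refine Finset.sum_le_sum fun i _ => ?_
    rw [Finset.sum_mul, Finset.sum_mul]
    refine Finset.sum_le_sum fun j _ => ?_
    calc adjMat G i j * u j * u i ≤ |adjMat G i j * u j * u i| := le_abs_self _
      _ = adjMat G i j * |u j| * |u i| := by
          rw [abs_mul, abs_mul, abs_of_nonneg (adjMat_nonneg _ _ _)]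
      _ = adjMat G i j * y j * y i := by rw [hyi, hyi]
  have hqy : (inner ℝ (TE G y) y : ℝ) = specRad G := by
    refine le_antisymm ?_ ?_
    · rw [inner_TE]; exact quad_le_specRad G y hny
    · rw [← hqu]; exact hle
  -- y is a maximizer on the unit sphere
  set Tclm := LinearMap.toContinuousLinearMap (TE G) with hT
  have hsa : IsSelfAdjoint Tclm :=
    ContinuousLinearMap.isSelfAdjoint_iff_isSymmetric.mpr
      (by rw [hT, LinearMap.coe_toContinuousLinearMap]; exact TE_symm G)
  have happ : ∀ z, Tclm.reApplyInnerSelf z = (inner ℝ (TE G z) z : ℝ) := by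
    intro z
    simp [ContinuousLinearMap.reApplyInnerSelf, hT]
  have hmax : IsMaxOn Tclm.reApplyInnerSelf (Metric.sphere (0:EuclideanSpace ℝ (Fin n)) ‖y‖) y := by
    intro z hz
    have hnz : ‖z‖ = 1 := by
      have : ‖z‖ = ‖y‖ := by simpa [Metric.mem_sphere, dist_zero_right] using hz
      rw [this, hny]
    simp only [Set.mem_setOf_eq, happ, hqy]
    rw [inner_TE]
    exact quad_le_specRad G z hnz
  have hEig := hsa.hasEigenvector_of_isMaxOn hy0 hmax
  have hsup : (⨆ x : {x : EuclideanSpace ℝ (Fin n) // x ≠ 0}, Tclm.rayleighQuotient x) =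
      specRad G := by
    rw [specRad_eq_iSup]
    refine iSup_congr fun z => ?_
    rw [ContinuousLinearMap.rayleighQuotient, happ]
    simp only [rayl]
  have : TE G y = specRad G • y := by
    have h1 := mem_eigenspace_iff.1 hEig.1
    rw [hsup] at h1
    norm_cast at h1
  exact ⟨y, fun i => by rw [hyi]; exact abs_nonneg _, hny, this⟩

end Perron

section Strict
variable {n : ℕ}

lemma perron_pos {G : SimpleGraph (Fin n)} (hc : G.Connected)
    {y : EuclideanSpace ℝ (Fin n)} (h0 : ∀ i, 0 ≤ y i) (hny : ‖y‖ = 1)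
    (heig : TE G y = specRad G • y) : ∀ i, 0 < y i := by
  have hstep : ∀ i j, y i = 0 → G.Adj i j → y j = 0 := by
    intro i j hi hadj
    have happ : (TE G y) i = (specRad G • y) i := by rw [heig]
    rw [TE_apply, PiLp.smul_apply, smul_eq_mul, hi, mul_zero] at happ
    have h2 := (Finset.sum_eq_zero_iff_of_nonneg
      (fun j' _ => mul_nonneg (adjMat_nonneg G i j') (h0 j'))).1 happ j (Finset.mem_univ j)
    rwa [adjMat_of_adj hadj, one_mul] at h2
  have hwalk : ∀ {i j : Fin n}, G.Walk i j → y i = 0 → y j = 0 := by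
    intro i j w
    induction w with
    | nil => exact id
    | cons h p ih => intro h0'; exact ih (hstep _ _ h0' h)
  intro i
  rcases (h0 i).lt_or_eq with h | h
  · exact h
  · exfalso
    have hall : ∀ j, y j = 0 := fun j =>
      (hc.preconnected i j).elim fun w => hwalk w h.symm
    have : ‖y‖ ^ 2 = 0 := by
      rw [norm_sq_E]
      exact Finset.sum_eq_zero fun j _ => by rw [hall j]; norm_num
    rw [hny] at this; norm_num at this

lemma specRad_lt_specRad {G G' : SimpleGraph (Fin n)} (hle : G ≤ G') (hc : G.Connected)
    {v w : Fin n} (h' : G'.Adj v w) (hnadj : ¬ G.Adj v w) :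
    specRad G < specRad G' := by
  haveI : Nonempty (Fin n) := ⟨v⟩
  obtain ⟨y, h0, hny, heig⟩ := exists_perron G
  have hpos := perron_pos hc h0 hny heig
  have hquadG : ∑ i, (∑ j, adjMat G i j * y j) * y i = specRad G := by
    rw [← inner_TE, heig, real_inner_smul_left, real_inner_self_eq_norm_sq, hny]; norm_num
  have hlt : ∑ i, (∑ j, adjMat G i j * y j) * y i
      < ∑ i, (∑ j, adjMat G' i j * y j) * y i := by
    refine Finset.sum_lt_sum (fun i _ => ?_) ⟨v, Finset.mem_univ v, ?_⟩
    · refine mul_le_mul_of_nonneg_right (Finset.sum_le_sum fun j _ => ?_) (h0 i)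
      exact mul_le_mul_of_nonneg_right (adjMat_le_of_le hle i j) (h0 j)
    · refine mul_lt_mul_of_pos_right (Finset.sum_lt_sum
        (fun j _ => mul_le_mul_of_nonneg_right (adjMat_le_of_le hle v j) (h0 j))
        ⟨w, Finset.mem_univ w, ?_⟩) (hpos v)
      rw [adjMat_of_not_adj hnadj, adjMat_of_adj h', zero_mul, one_mul]
      exact hpos w
  calc specRad G = _ := hquadG.symm
    _ < _ := hlt
    _ ≤ specRad G' := quad_le_specRad G' y hny

end Strict

section GraphLemmas
variable {n : ℕ}

lemma minDeg_eq (G : SimpleGraph (Fin n)) (inst : DecidableRel G.Adj) :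
    minDeg G = @SimpleGraph.minDegree _ G _ inst := by
  unfold minDeg
  exact congrArg (fun i => @SimpleGraph.minDegree _ G _ i) (Subsingleton.elim _ _)

lemma minDeg_mono [Nonempty (Fin n)] {G G' : SimpleGraph (Fin n)} (h : G ≤ G') :
    minDeg G ≤ minDeg G' := by
  classical
  rw [minDeg_eq G (Classical.decRel _), minDeg_eq G' (Classical.decRel _)]
  apply SimpleGraph.le_minDegree_of_forall_le_degree
  intro v
  refine le_trans (SimpleGraph.minDegree_le_degree _ v) ?_
  apply Finset.card_le_card
  intro x hx
  rw [SimpleGraph.mem_neighborFinset] at hx ⊢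
  exact h hx

end GraphLemmas

theorem maximizer_two_components {n k : ℕ} (hn : k + 2 ≤ n)
    (Gs : SimpleGraph (Fin n)) (hconn : Gs.Connected) (hκ : ¬ IsKConnected Gs (k + 1))
    (hδ : k ≤ minDeg Gs)
    (hmax : ∀ G : SimpleGraph (Fin n), G.Connected → ¬ IsKConnected G (k + 1) →
      k ≤ minDeg G → specRad G ≤ specRad Gs)
    (S : Finset (Fin n)) (hS : S.card = k) (hcut : Disconnects Gs S) :
    ∃ C₁ C₂ : (Gs.induce ((↑(Sᶜ) : Set (Fin n)))).ConnectedComponent,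
      C₁ ≠ C₂ ∧ ∀ C, C = C₁ ∨ C = C₂ := by
  haveI : Nonempty (Fin n) := ⟨⟨0, by omega⟩⟩
  set H := Gs.induce ((↑(Sᶜ) : Set (Fin n))) with hH
  by_contra hcon
  push_neg at hcon
  -- two non-reachable vertices
  have hcut' := hcut
  rw [Disconnects, SimpleGraph.Preconnected] at hcut'
  push_neg at hcut'
  obtain ⟨u, vt, hv⟩ := hcut'
  set C₁ := H.connectedComponentMk u with hC1
  set C₂ := H.connectedComponentMk vt with hC2
  have hne : C₁ ≠ C₂ := fun h => hv (SimpleGraph.ConnectedComponent.exact h)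
  obtain ⟨C₃, hC31, hC32⟩ := hcon C₁ C₂ hne
  obtain ⟨wt, hwt⟩ := C₃.exists_rep
  -- the new edge
  have hvw_ne : (vt : Fin n) ≠ (wt : Fin n) := by
    intro h
    apply hC32
    rw [← hwt, hC2]
    congr 1
    exact Subtype.ext h.symm
  have hnadj : ¬ Gs.Adj (vt : Fin n) (wt : Fin n) := by
    intro h
    apply hC32
    rw [← hwt, hC2]
    exact (SimpleGraph.ConnectedComponent.connectedComponentMk_eq_of_adj
      (by simpa [hH] using h : H.Adj vt wt)).symm
  set G' := Gs ⊔ SimpleGraph.fromEdgeSet {s((vt : Fin n), (wt : Fin n))} with hG'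
  have hle : Gs ≤ G' := le_sup_left
  have hadj' : G'.Adj (vt : Fin n) (wt : Fin n) := by
    rw [hG', SimpleGraph.sup_adj, SimpleGraph.fromEdgeSet_adj]
    exact Or.inr ⟨Set.mem_singleton _, hvw_ne⟩
  -- the reachable set from u in G' − S stays in C₁
  set H' := G'.induce ((↑(Sᶜ) : Set (Fin n))) with hH'
  have hstep : ∀ a b : ((↑(Sᶜ) : Set (Fin n))), H'.Adj a b →
      H.connectedComponentMk a = C₁ → H.connectedComponentMk b = C₁ := by
    intro a b hab ha
    have : G'.Adj (a : Fin n) (b : Fin n) := by simpa [hH'] using hab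
    rw [hG', SimpleGraph.sup_adj] at this
    rcases this with h | h
    · rw [← ha]
      exact (SimpleGraph.ConnectedComponent.connectedComponentMk_eq_of_adj
        (by simpa [hH] using h : H.Adj a b)).symm
    · rw [SimpleGraph.fromEdgeSet_adj, Set.mem_singleton_iff, Sym2.eq_iff] at h
      exfalso
      rcases h.1 with ⟨h1, -⟩ | ⟨h1, -⟩
      · apply hne
        rw [← ha, hC2]
        congr 1
        exact Subtype.ext h1
      · apply hC31
        rw [← ha, ← hwt]
        congr 1
        exact Subtype.ext h1.symm
  have hwalkkey : ∀ (a b : ((↑(Sᶜ) : Set (Fin n)))) (p : H'.Walk a b),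
      H.connectedComponentMk a = C₁ → H.connectedComponentMk b = C₁ := by
    intro a b p
    induction p with
    | nil => exact id
    | cons h p ih => exact fun ha => ih (hstep _ _ h ha)
  have hdisc' : Disconnects G' S := by
    rw [Disconnects, SimpleGraph.Preconnected]
    push_neg
    refine ⟨u, vt, fun hr => ?_⟩
    obtain ⟨p⟩ := hr
    exact hne ((hwalkkey u vt p rfl) ▸ rfl)
  have hκ' : ¬ IsKConnected G' (k + 1) := by
    rintro (⟨hn1, htop⟩ | ⟨-, hall⟩)
    · apply hdisc'
      rw [SimpleGraph.Preconnected]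
      intro a b
      by_cases hab : a = b
      · rw [hab]
      · refine SimpleGraph.Adj.reachable (?_ : H'.Adj a b)
        have hne' : ((a : Fin n)) ≠ (b : Fin n) := fun h => hab (Subtype.ext h)
        have hGab : G'.Adj (a : Fin n) (b : Fin n) := by
          rw [htop]; exact hne'
        simpa [hH'] using hGab
    · exact hall S (by omega) hdisc'
  have hconn' : G'.Connected := hconn.mono hle
  have hδ' : k ≤ minDeg G' := le_trans hδ (minDeg_mono hle)
  have h1 := hmax G' hconn' hκ' hδ'
  have h2 := specRad_lt_specRad hle hconn hadj' hnadj
  exact absurd h1 (not_le.2 h2)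
end

section
/- The spectral radius of G_{k,δ,n} = K_k + (K_{δ-k+1} ∪ K_{n-δ-1}) is the largest root of the cubic x^3 + (3−n)x^2 + (nδ − δ^2 − n − kn + k + kδ + 2 − 2δ)x + (knδ + k^2 + nδ + k^2δ − kδ − k^2 n − kδ^2 − 2δ − δ^2) = 0. -/
open Finset

section AuxiliaryLemmas

open Matrix Polynomial

private lemma algmap_mulVec_aux {m : ℕ} (μ : ℝ) (v : Fin m → ℝ) :
    (algebraMap ℝ (Matrix (Fin m) (Fin m) ℝ)) μ *ᵥ v = μ • v := by
  funext i
  rw [Matrix.algebraMap_eq_diagonal, Matrix.mulVec_diagonal]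
  simp [Pi.algebraMap_apply]

private lemma mem_spectrum_iff_eig_aux {m : ℕ} (M : Matrix (Fin m) (Fin m) ℝ) (μ : ℝ) :
    μ ∈ spectrum ℝ M ↔ ∃ v : Fin m → ℝ, v ≠ 0 ∧ M.mulVec v = μ • v := by
  rw [spectrum.mem_iff, Matrix.isUnit_iff_isUnit_det, isUnit_iff_ne_zero, not_ne_iff,
    ← Matrix.exists_mulVec_eq_zero_iff]
  constructor
  · rintro ⟨v, hv, h⟩
    rw [Matrix.sub_mulVec, algmap_mulVec_aux, sub_eq_zero] at h
    exact ⟨v, hv, h.symm⟩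
  · rintro ⟨v, hv, h⟩
    refine ⟨v, hv, ?_⟩
    rw [Matrix.sub_mulVec, algmap_mulVec_aux, sub_eq_zero]
    exact h.symm

private lemma card_filter_coe_lt_aux {n k : ℕ} (hk : k ≤ n) :
    (univ.filter (fun j : Fin n => (j:ℕ) < k)).card = k := by
  classical
  rw [Finset.card_filter]
  rw [Fin.sum_univ_eq_sum_range (fun j => if j < k then 1 else 0) n]
  rw [← Finset.card_filter]
  have : (Finset.range n).filter (fun j => j < k) = Finset.range k := by
    ext a; simp only [mem_filter, mem_range]; omega
  rw [this, Finset.card_range]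

private lemma card_filter_mid_aux {n k δ : ℕ} (hkδ : k ≤ δ) (hn : δ + 1 ≤ n) :
    (univ.filter (fun j : Fin n => ¬(j:ℕ) < k ∧ (j:ℕ) ≤ δ)).card = δ + 1 - k := by
  classical
  rw [Finset.card_filter]
  rw [Fin.sum_univ_eq_sum_range (fun j => if ¬ j < k ∧ j ≤ δ then 1 else 0) n]
  rw [← Finset.card_filter]
  have : (Finset.range n).filter (fun j => ¬ j < k ∧ j ≤ δ) = Finset.Ico k (δ+1) := by
    ext a; simp only [mem_filter, mem_range, mem_Ico]; omega
  rw [this, Nat.card_Ico]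

private lemma card_filter_hi_aux {n δ : ℕ} (hn : δ + 1 ≤ n) :
    (univ.filter (fun j : Fin n => ¬(j:ℕ) ≤ δ)).card = n - δ - 1 := by
  classical
  rw [Finset.card_filter]
  rw [Fin.sum_univ_eq_sum_range (fun j => if ¬ j ≤ δ then 1 else 0) n]
  rw [← Finset.card_filter]
  have : (Finset.range n).filter (fun j => ¬ j ≤ δ) = Finset.Ico (δ+1) n := by
    ext a; simp only [mem_filter, mem_range, mem_Ico]; omega
  rw [this, Nat.card_Ico]
  omega

private lemma Gkdn_adj_aux {k δ n : ℕ} (a b : Fin n) : (Gkdn k δ n).Adj a b ↔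
    (a ≠ b ∧ ((a : ℕ) < k ∨ (b : ℕ) < k ∨ ((a : ℕ) ≤ δ ∧ (b : ℕ) ≤ δ) ∨
    (δ < (a : ℕ) ∧ δ < (b : ℕ)))) := Iff.rfl

section
variable {k δ n : ℕ}

lemma mulVec_Gkdn_aux (hk : 1 ≤ k) (hkδ : k ≤ δ) (hn : δ + 2 ≤ n) (x : Fin n → ℝ) (i : Fin n) :
    (adjMat (Gkdn k δ n)).mulVec x i =
      (if (i:ℕ) < k then
        (∑ j ∈ univ.filter (fun j : Fin n => (j:ℕ) < k), x j)
          + (∑ j ∈ univ.filter (fun j : Fin n => ¬(j:ℕ) < k ∧ (j:ℕ) ≤ δ), x j)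
          + (∑ j ∈ univ.filter (fun j : Fin n => ¬(j:ℕ) ≤ δ), x j)
      else if (i:ℕ) ≤ δ then
        (∑ j ∈ univ.filter (fun j : Fin n => (j:ℕ) < k), x j)
          + (∑ j ∈ univ.filter (fun j : Fin n => ¬(j:ℕ) < k ∧ (j:ℕ) ≤ δ), x j)
      else
        (∑ j ∈ univ.filter (fun j : Fin n => (j:ℕ) < k), x j)
          + (∑ j ∈ univ.filter (fun j : Fin n => ¬(j:ℕ) ≤ δ), x j)) - x i := by
  classical
  have hA : ∀ j, adjMat (Gkdn k δ n) i j = if (Gkdn k δ n).Adj i j then (1:ℝ) else 0 := by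
    intro j; simp [adjMat, SimpleGraph.adjMatrix_apply]
  have key : (adjMat (Gkdn k δ n)).mulVec x i
      = ∑ j ∈ univ.filter (fun j => (Gkdn k δ n).Adj i j), x j := by
    rw [Matrix.mulVec, Finset.sum_filter, dotProduct]
    apply Finset.sum_congr rfl
    intro j _
    rw [hA j]
    by_cases h : (Gkdn k δ n).Adj i j <;> simp [h]
  rw [key]
  by_cases h1 : (i:ℕ) < k
  · have hset : univ.filter (fun j => (Gkdn k δ n).Adj i j) = univ.erase i := by
      ext j
      simp only [mem_filter, mem_univ, true_and, and_true, mem_erase, Gkdn_adj_aux, ne_eq,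
        Fin.ext_iff]
      omega
    rw [hset, if_pos h1]
    have h0 := Finset.sum_erase_add univ x (Finset.mem_univ i)
    have htot : ∑ j, x j =
        (∑ j ∈ univ.filter (fun j : Fin n => (j:ℕ) < k), x j)
          + (∑ j ∈ univ.filter (fun j : Fin n => ¬(j:ℕ) < k ∧ (j:ℕ) ≤ δ), x j)
          + (∑ j ∈ univ.filter (fun j : Fin n => ¬(j:ℕ) ≤ δ), x j) := by
      rw [← Finset.sum_filter_add_sum_filter_not univ (fun j : Fin n => (j:ℕ) < k) x]
      rw [← Finset.sum_filter_add_sum_filter_not (univ.filter (fun j : Fin n => ¬(j:ℕ) < k))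
        (fun j : Fin n => (j:ℕ) ≤ δ) x, Finset.filter_filter, Finset.filter_filter]
      have e1 : univ.filter (fun j : Fin n => ¬(j:ℕ) < k ∧ ¬(j:ℕ) ≤ δ)
          = univ.filter (fun j : Fin n => ¬(j:ℕ) ≤ δ) := by
        ext j; simp only [mem_filter, mem_univ, true_and]; omega
      rw [e1, add_assoc]
    linarith [htot, h0]
  by_cases h2 : (i:ℕ) ≤ δ
  · have hset : univ.filter (fun j => (Gkdn k δ n).Adj i j)
        = (univ.filter (fun j : Fin n => (j:ℕ) ≤ δ)).erase i := by
      ext j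
      simp only [mem_filter, mem_univ, true_and, and_true, mem_erase, Gkdn_adj_aux, ne_eq,
        Fin.ext_iff]
      omega
    rw [hset, if_neg h1, if_pos h2]
    have hmem : i ∈ univ.filter (fun j : Fin n => (j:ℕ) ≤ δ) := by
      simp only [mem_filter, mem_univ, true_and]; exact h2
    have h0 := Finset.sum_erase_add _ x hmem
    have htot : ∑ j ∈ univ.filter (fun j : Fin n => (j:ℕ) ≤ δ), x j =
        (∑ j ∈ univ.filter (fun j : Fin n => (j:ℕ) < k), x j)
          + (∑ j ∈ univ.filter (fun j : Fin n => ¬(j:ℕ) < k ∧ (j:ℕ) ≤ δ), x j) := by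
      rw [← Finset.sum_filter_add_sum_filter_not (univ.filter (fun j : Fin n => (j:ℕ) ≤ δ))
        (fun j : Fin n => (j:ℕ) < k) x, Finset.filter_filter, Finset.filter_filter]
      have e1 : univ.filter (fun j : Fin n => (j:ℕ) ≤ δ ∧ (j:ℕ) < k)
          = univ.filter (fun j : Fin n => (j:ℕ) < k) := by
        ext j; simp only [mem_filter, mem_univ, true_and]; omega
      have e2 : univ.filter (fun j : Fin n => (j:ℕ) ≤ δ ∧ ¬(j:ℕ) < k)
          = univ.filter (fun j : Fin n => ¬(j:ℕ) < k ∧ (j:ℕ) ≤ δ) := by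
        ext j; simp only [mem_filter, mem_univ, true_and]; omega
      rw [e1, e2]
    linarith [htot, h0]
  · have hset : univ.filter (fun j => (Gkdn k δ n).Adj i j)
        = (univ.filter (fun j : Fin n => (j:ℕ) < k ∨ ¬(j:ℕ) ≤ δ)).erase i := by
      ext j
      simp only [mem_filter, mem_univ, true_and, and_true, mem_erase, Gkdn_adj_aux, ne_eq,
        Fin.ext_iff]
      omega
    rw [hset, if_neg h1, if_neg h2]
    have hmem : i ∈ univ.filter (fun j : Fin n => (j:ℕ) < k ∨ ¬(j:ℕ) ≤ δ) := by
      simp only [mem_filter, mem_univ, true_and]; omega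
    have h0 := Finset.sum_erase_add _ x hmem
    have htot : ∑ j ∈ univ.filter (fun j : Fin n => (j:ℕ) < k ∨ ¬(j:ℕ) ≤ δ), x j =
        (∑ j ∈ univ.filter (fun j : Fin n => (j:ℕ) < k), x j)
          + (∑ j ∈ univ.filter (fun j : Fin n => ¬(j:ℕ) ≤ δ), x j) := by
      rw [← Finset.sum_filter_add_sum_filter_not
        (univ.filter (fun j : Fin n => (j:ℕ) < k ∨ ¬(j:ℕ) ≤ δ))
        (fun j : Fin n => (j:ℕ) < k) x, Finset.filter_filter, Finset.filter_filter]
      have e1 : univ.filter (fun j : Fin n => ((j:ℕ) < k ∨ ¬(j:ℕ) ≤ δ) ∧ (j:ℕ) < k)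
          = univ.filter (fun j : Fin n => (j:ℕ) < k) := by
        ext j; simp only [mem_filter, mem_univ, true_and]; omega
      have e2 : univ.filter (fun j : Fin n => ((j:ℕ) < k ∨ ¬(j:ℕ) ≤ δ) ∧ ¬(j:ℕ) < k)
          = univ.filter (fun j : Fin n => ¬(j:ℕ) ≤ δ) := by
        ext j; simp only [mem_filter, mem_univ, true_and]; omega
      rw [e1, e2]
    linarith [htot, h0]

lemma classify_aux (hk : 1 ≤ k) (hkδ : k ≤ δ) (hn : δ + 2 ≤ n) (μ : ℝ) (x : Fin n → ℝ)
    (hx : x ≠ 0)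
    (heig : ∀ i : Fin n, μ * x i =
      (if (i:ℕ) < k then
        (∑ j ∈ univ.filter (fun j : Fin n => (j:ℕ) < k), x j)
          + (∑ j ∈ univ.filter (fun j : Fin n => ¬(j:ℕ) < k ∧ (j:ℕ) ≤ δ), x j)
          + (∑ j ∈ univ.filter (fun j : Fin n => ¬(j:ℕ) ≤ δ), x j)
      else if (i:ℕ) ≤ δ then
        (∑ j ∈ univ.filter (fun j : Fin n => (j:ℕ) < k), x j)
          + (∑ j ∈ univ.filter (fun j : Fin n => ¬(j:ℕ) < k ∧ (j:ℕ) ≤ δ), x j)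
      else
        (∑ j ∈ univ.filter (fun j : Fin n => (j:ℕ) < k), x j)
          + (∑ j ∈ univ.filter (fun j : Fin n => ¬(j:ℕ) ≤ δ), x j)) - x i) :
    μ = -1 ∨ (μ^3 + (3-(n:ℝ))*μ^2 + ((n:ℝ)*δ - (δ:ℝ)^2 - n - k*n + k + k*δ + 2 - 2*δ)*μ +
      ((k:ℝ)*n*δ + (k:ℝ)^2 + (n:ℝ)*δ + (k:ℝ)^2*δ - k*δ - (k:ℝ)^2*n - k*(δ:ℝ)^2 - 2*δ - (δ:ℝ)^2)
        = 0) := by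
  classical
  set F1 : Finset (Fin n) := univ.filter (fun j : Fin n => (j:ℕ) < k) with hF1
  set F2 : Finset (Fin n) := univ.filter (fun j : Fin n => ¬(j:ℕ) < k ∧ (j:ℕ) ≤ δ) with hF2
  set F3 : Finset (Fin n) := univ.filter (fun j : Fin n => ¬(j:ℕ) ≤ δ) with hF3
  set s1 := ∑ j ∈ F1, x j with hs1
  set s2 := ∑ j ∈ F2, x j with hs2
  set s3 := ∑ j ∈ F3, x j with hs3
  have hc1 : F1.card = k := card_filter_coe_lt_aux (by omega)
  have hc2 : F2.card = δ + 1 - k := card_filter_mid_aux hkδ (by omega)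
  have hc3 : F3.card = n - δ - 1 := card_filter_hi_aux (by omega)
  have E1 : μ * s1 = (k:ℝ) * (s1 + s2 + s3) - s1 := by
    rw [hs1, Finset.mul_sum]
    calc ∑ j ∈ F1, μ * x j = ∑ j ∈ F1, ((s1 + s2 + s3) - x j) := by
          refine Finset.sum_congr rfl (fun j hj => ?_)
          have hjk : (j:ℕ) < k := by
            rw [hF1] at hj; simpa using hj
          rw [heig j, if_pos hjk]
      _ = (F1.card : ℝ) * (s1 + s2 + s3) - ∑ j ∈ F1, x j := by
          rw [Finset.sum_sub_distrib, Finset.sum_const, nsmul_eq_mul]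
      _ = (k:ℝ) * (s1 + s2 + s3) - s1 := by rw [hc1, hs1]
  have E2 : μ * s2 = ((δ:ℝ) + 1 - k) * (s1 + s2) - s2 := by
    rw [hs2, Finset.mul_sum]
    calc ∑ j ∈ F2, μ * x j = ∑ j ∈ F2, ((s1 + s2) - x j) := by
          refine Finset.sum_congr rfl (fun j hj => ?_)
          have hjk : ¬(j:ℕ) < k ∧ (j:ℕ) ≤ δ := by
            rw [hF2] at hj; simpa using hj
          rw [heig j, if_neg hjk.1, if_pos hjk.2]
      _ = (F2.card : ℝ) * (s1 + s2) - ∑ j ∈ F2, x j := by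
          rw [Finset.sum_sub_distrib, Finset.sum_const, nsmul_eq_mul]
      _ = ((δ:ℝ) + 1 - k) * (s1 + s2) - s2 := by
          rw [hc2, hs2]
          congr 1
          congr 1
          push_cast [Nat.cast_sub (by omega : k ≤ δ + 1)]
          ring
  have E3 : μ * s3 = ((n:ℝ) - δ - 1) * (s1 + s3) - s3 := by
    rw [hs3, Finset.mul_sum]
    calc ∑ j ∈ F3, μ * x j = ∑ j ∈ F3, ((s1 + s3) - x j) := by
          refine Finset.sum_congr rfl (fun j hj => ?_)
          have hjk : ¬(j:ℕ) ≤ δ := by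
            rw [hF3] at hj; simpa using hj
          rw [heig j, if_neg (by omega), if_neg hjk]
      _ = (F3.card : ℝ) * (s1 + s3) - ∑ j ∈ F3, x j := by
          rw [Finset.sum_sub_distrib, Finset.sum_const, nsmul_eq_mul]
      _ = ((n:ℝ) - δ - 1) * (s1 + s3) - s3 := by
          rw [hc3, hs3]
          congr 1
          congr 1
          rw [Nat.cast_sub (by omega : 1 ≤ n - δ), Nat.cast_sub (by omega : δ ≤ n),
            Nat.cast_one]
  by_cases hs : s1 = 0 ∧ s2 = 0 ∧ s3 = 0
  · left
    obtain ⟨hz1, hz2, hz3⟩ := hs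
    have hxi : ∀ i, μ * x i = - x i := by
      intro i
      rw [heig i]
      split_ifs <;> simp only [hz1, hz2, hz3] <;> ring
    obtain ⟨i, hi⟩ := Function.ne_iff.mp hx
    have : (μ + 1) * x i = 0 := by have := hxi i; ring_nf; linarith
    rcases mul_eq_zero.mp this with h | h
    · linarith
    · exact absurd h hi
  · right
    set M : Matrix (Fin 3) (Fin 3) ℝ :=
      !![μ - ((k:ℝ) - 1), -(k:ℝ), -(k:ℝ);
         -((δ:ℝ) + 1 - k), μ - ((δ:ℝ) - k), 0;
         -((n:ℝ) - δ - 1), 0, μ - ((n:ℝ) - δ - 2)] with hM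
    have hvec : M.mulVec ![s1, s2, s3] = 0 := by
      funext i
      fin_cases i <;>
        simp [hM, Matrix.mulVec, dotProduct, Fin.sum_univ_three] <;> ring_nf <;>
        [linarith [E1]; linarith [E2]; linarith [E3]]
    have hsne : ![s1, s2, s3] ≠ 0 := by
      intro h
      apply hs
      refine ⟨?_, ?_, ?_⟩
      · have := congrFun h 0; simpa using this
      · have := congrFun h 1; simpa using this
      · have := congrFun h 2; simpa using this
    have hdet : M.det = 0 := by
      rw [← Matrix.exists_mulVec_eq_zero_iff]
      exact ⟨![s1, s2, s3], hsne, hvec⟩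
    rw [hM] at hdet
    simp [Matrix.det_fin_three] at hdet
    linear_combination hdet

lemma construct_aux (hk : 1 ≤ k) (hkδ : k ≤ δ) (hn : δ + 2 ≤ n) (μ : ℝ)
    (hroot : μ^3 + (3-(n:ℝ))*μ^2 + ((n:ℝ)*δ - (δ:ℝ)^2 - n - k*n + k + k*δ + 2 - 2*δ)*μ +
      ((k:ℝ)*n*δ + (k:ℝ)^2 + (n:ℝ)*δ + (k:ℝ)^2*δ - k*δ - (k:ℝ)^2*n - k*(δ:ℝ)^2 - 2*δ - (δ:ℝ)^2)
        = 0) :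
    ∃ x : Fin n → ℝ, x ≠ 0 ∧ (∀ i : Fin n, μ * x i =
      (if (i:ℕ) < k then
        (∑ j ∈ univ.filter (fun j : Fin n => (j:ℕ) < k), x j)
          + (∑ j ∈ univ.filter (fun j : Fin n => ¬(j:ℕ) < k ∧ (j:ℕ) ≤ δ), x j)
          + (∑ j ∈ univ.filter (fun j : Fin n => ¬(j:ℕ) ≤ δ), x j)
      else if (i:ℕ) ≤ δ then
        (∑ j ∈ univ.filter (fun j : Fin n => (j:ℕ) < k), x j)
          + (∑ j ∈ univ.filter (fun j : Fin n => ¬(j:ℕ) < k ∧ (j:ℕ) ≤ δ), x j)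
      else
        (∑ j ∈ univ.filter (fun j : Fin n => (j:ℕ) < k), x j)
          + (∑ j ∈ univ.filter (fun j : Fin n => ¬(j:ℕ) ≤ δ), x j)) - x i) := by
  classical
  set M : Matrix (Fin 3) (Fin 3) ℝ :=
    !![μ - ((k:ℝ) - 1), -((δ:ℝ) + 1 - k), -((n:ℝ) - δ - 1);
       -(k:ℝ), μ - ((δ:ℝ) - k), 0;
       -(k:ℝ), 0, μ - ((n:ℝ) - δ - 2)] with hM
  have hdet : M.det = 0 := by
    rw [hM, Matrix.det_fin_three]
    simp only [Matrix.cons_val', Matrix.cons_val_zero, Matrix.cons_val_one, Matrix.head_cons,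
      Matrix.cons_val_two, Matrix.tail_cons, Matrix.head_fin_const, Matrix.empty_val',
      Matrix.cons_val_fin_one, Matrix.of_apply]
    linear_combination hroot
  obtain ⟨v, hv, hMv⟩ := (Matrix.exists_mulVec_eq_zero_iff).mpr hdet
  -- component equations
  have h0 := congrFun hMv 0
  have h1 := congrFun hMv 1
  have h2 := congrFun hMv 2
  rw [hM] at h0 h1 h2
  simp [Matrix.mulVec, dotProduct, Fin.sum_univ_three] at h0 h1 h2
  -- h0 : (μ - (k-1)) * v 0 - (δ+1-k) * v 1 - (n-δ-1) * v 2 = 0  (some normal form)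
  set x : Fin n → ℝ := fun i => if (i:ℕ) < k then v 0 else if (i:ℕ) ≤ δ then v 1 else v 2
    with hx
  have sum1 : (∑ j ∈ univ.filter (fun j : Fin n => (j:ℕ) < k), x j) = (k:ℝ) * v 0 := by
    have e : ∀ j ∈ univ.filter (fun j : Fin n => (j:ℕ) < k), x j = v 0 := by
      intro j hj
      have hjk : (j:ℕ) < k := by simpa using hj
      rw [hx]; simp only [if_pos hjk]
    rw [Finset.sum_congr rfl e, Finset.sum_const, card_filter_coe_lt_aux (by omega), nsmul_eq_mul]
  have sum2 : (∑ j ∈ univ.filter (fun j : Fin n => ¬(j:ℕ) < k ∧ (j:ℕ) ≤ δ), x j)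
      = ((δ:ℝ) + 1 - k) * v 1 := by
    have e : ∀ j ∈ univ.filter (fun j : Fin n => ¬(j:ℕ) < k ∧ (j:ℕ) ≤ δ), x j = v 1 := by
      intro j hj
      have hjk : ¬(j:ℕ) < k ∧ (j:ℕ) ≤ δ := by simpa using hj
      rw [hx]; simp only [if_neg hjk.1, if_pos hjk.2]
    rw [Finset.sum_congr rfl e, Finset.sum_const, card_filter_mid_aux hkδ (by omega), nsmul_eq_mul]
    have ec : ((δ + 1 - k : ℕ) : ℝ) = (δ:ℝ) + 1 - k := by
      rw [Nat.cast_sub (by omega)]; push_cast; ring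
    rw [ec]
  have sum3 : (∑ j ∈ univ.filter (fun j : Fin n => ¬(j:ℕ) ≤ δ), x j)
      = ((n:ℝ) - δ - 1) * v 2 := by
    have e : ∀ j ∈ univ.filter (fun j : Fin n => ¬(j:ℕ) ≤ δ), x j = v 2 := by
      intro j hj
      have hjk : ¬(j:ℕ) ≤ δ := by simpa using hj
      rw [hx]; simp only [if_neg (by omega : ¬(j:ℕ) < k), if_neg hjk]
    rw [Finset.sum_congr rfl e, Finset.sum_const, card_filter_hi_aux (by omega), nsmul_eq_mul]
    have ec : ((n - δ - 1 : ℕ) : ℝ) = (n:ℝ) - δ - 1 := by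
      rw [Nat.cast_sub (by omega : 1 ≤ n - δ), Nat.cast_sub (by omega : δ ≤ n), Nat.cast_one]
    rw [ec]
  refine ⟨x, ?_, ?_⟩
  · intro hzero
    apply hv
    funext j
    fin_cases j
    · have := congrFun hzero ⟨0, by omega⟩
      simpa [hx, if_pos (by omega : (0:ℕ) < k)] using this
    · have := congrFun hzero ⟨k, by omega⟩
      simp only [hx] at this
      rw [if_neg (show ¬(k < k) by omega), if_pos (show k ≤ δ from hkδ)] at this
      simpa using this
    · have := congrFun hzero ⟨δ+1, by omega⟩
      simp only [hx] at this
      rw [if_neg (show ¬(δ+1 < k) by omega), if_neg (show ¬(δ+1 ≤ δ) by omega)] at this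
      simpa using this
  · intro i
    rw [sum1, sum2, sum3]
    by_cases hik : (i:ℕ) < k
    · rw [if_pos hik]
      have hxi : x i = v 0 := by rw [hx]; simp only [if_pos hik]
      rw [hxi]; linarith [h0]
    by_cases hid : (i:ℕ) ≤ δ
    · rw [if_neg hik, if_pos hid]
      have hxi : x i = v 1 := by rw [hx]; simp only [if_neg hik, if_pos hid]
      rw [hxi]; linarith [h1]
    · rw [if_neg hik, if_neg hid]
      have hxi : x i = v 2 := by rw [hx]; simp only [if_neg hik, if_neg hid]
      rw [hxi]; linarith [h2]

lemma exists_root_ge_aux (hk : 1 ≤ k) (hkδ : k ≤ δ) (hn : δ + 2 ≤ n) :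
    ∃ r : ℝ, (δ:ℝ) ≤ r ∧
      (r^3 + (3-(n:ℝ))*r^2 + ((n:ℝ)*δ - (δ:ℝ)^2 - n - k*n + k + k*δ + 2 - 2*δ)*r +
      ((k:ℝ)*n*δ + (k:ℝ)^2 + (n:ℝ)*δ + (k:ℝ)^2*δ - k*δ - (k:ℝ)^2*n - k*(δ:ℝ)^2 - 2*δ - (δ:ℝ)^2)
        = 0) := by
  set K := (k:ℝ) with hKdef
  set D := (δ:ℝ) with hDdef
  set N := (n:ℝ) with hNdef
  have hK : 1 ≤ K := by rw [hKdef]; exact_mod_cast hk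
  have hKD : K ≤ D := by rw [hKdef, hDdef]; exact_mod_cast hkδ
  have hDN : D + 2 ≤ N := by rw [hDdef, hNdef]; exact_mod_cast hn
  set f : ℝ → ℝ := fun r => r^3 + (3-N)*r^2 + (N*D - D^2 - N - K*N + K + K*D + 2 - 2*D)*r +
      (K*N*D + K^2 + N*D + K^2*D - K*D - K^2*N - K*D^2 - 2*D - D^2) with hf
  have hcont : ContinuousOn f (Set.Icc D N) := by
    apply Continuous.continuousOn; fun_prop
  have hfD : f D ≤ 0 := by
    have : f D = -(K^2 * (N - D - 1)) := by rw [hf]; ring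
    nlinarith
  have hfN : 0 ≤ f N := by
    have : f N = 4 + 6*(N-D-1) + 2*(N-D-1)^2 + 4*(D-K) + 5*(N-D-1)*(D-K)
        + (N-D-1)^2*(D-K) + (D-K)^2 + (N-D-1)*(D-K)^2
        + 4*K + 4*(N-D-1)*K + 2*(D-K)*K + 2*(N-D-1)*(D-K)*K + K^2 := by
      rw [hf]; ring
    have hA : (0:ℝ) ≤ N - D - 1 := by linarith
    have hB : (0:ℝ) ≤ D - K := by linarith
    have hK0 : (0:ℝ) ≤ K := by linarith
    rw [this]
    have := sq_nonneg (N-D-1); have := sq_nonneg (D-K)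
    positivity
  have hsub : Set.Icc (f D) (f N) ⊆ f '' Set.Icc D N :=
    intermediate_value_Icc (by linarith) hcont
  have h0 : (0:ℝ) ∈ Set.Icc (f D) (f N) := ⟨hfD, hfN⟩
  obtain ⟨r, hr, hfr⟩ := hsub h0
  exact ⟨r, hr.1, hfr⟩

lemma roots_finite_aux (k δ n : ℕ) :
    {y : ℝ | y^3 + (3-(n:ℝ))*y^2 + ((n:ℝ)*δ - (δ:ℝ)^2 - n - k*n + k + k*δ + 2 - 2*δ)*y +
      ((k:ℝ)*n*δ + (k:ℝ)^2 + (n:ℝ)*δ + (k:ℝ)^2*δ - k*δ - (k:ℝ)^2*n - k*(δ:ℝ)^2 - 2*δ - (δ:ℝ)^2)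
        = 0}.Finite := by
  set c2 := (3-(n:ℝ))
  set c1 := ((n:ℝ)*δ - (δ:ℝ)^2 - n - k*n + k + k*δ + 2 - 2*δ)
  set c0 := ((k:ℝ)*n*δ + (k:ℝ)^2 + (n:ℝ)*δ + (k:ℝ)^2*δ - k*δ - (k:ℝ)^2*n - k*(δ:ℝ)^2 - 2*δ - (δ:ℝ)^2)
  have : {y : ℝ | y^3 + c2*y^2 + c1*y + c0 = 0}
      = {y : ℝ | (X^3 + C c2 * X^2 + C c1 * X + C c0 : ℝ[X]).IsRoot y} := by
    ext y; simp [Polynomial.IsRoot]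
  rw [this]
  apply Polynomial.finite_setOf_isRoot
  intro h
  have hcoeff := congrArg (fun p : ℝ[X] => p.coeff 3) h
  simp [Polynomial.coeff_add, Polynomial.coeff_C_mul, Polynomial.coeff_X_pow,
    Polynomial.coeff_C] at hcoeff
end

end AuxiliaryLemmas

theorem specRad_Gkdn_cubic {k δ n : ℕ} (hk : 1 ≤ k) (hkδ : k ≤ δ)
    (hn : δ + 2 ≤ n) :
    (specRad (Gkdn k δ n)) ^ 3 + (3 - (n : ℝ)) * (specRad (Gkdn k δ n)) ^ 2 +
        ((n : ℝ) * δ - (δ : ℝ) ^ 2 - n - k * n + k + k * δ + 2 - 2 * δ) *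
          specRad (Gkdn k δ n) +
        ((k : ℝ) * n * δ + (k : ℝ) ^ 2 + (n : ℝ) * δ + (k : ℝ) ^ 2 * δ - k * δ -
          (k : ℝ) ^ 2 * n - k * (δ : ℝ) ^ 2 - 2 * δ - (δ : ℝ) ^ 2) = 0 ∧
      ∀ y : ℝ,
        y ^ 3 + (3 - (n : ℝ)) * y ^ 2 +
            ((n : ℝ) * δ - (δ : ℝ) ^ 2 - n - k * n + k + k * δ + 2 - 2 * δ) * y +
            ((k : ℝ) * n * δ + (k : ℝ) ^ 2 + (n : ℝ) * δ + (k : ℝ) ^ 2 * δ - k * δ -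
              (k : ℝ) ^ 2 * n - k * (δ : ℝ) ^ 2 - 2 * δ - (δ : ℝ) ^ 2) = 0 →
          y ≤ specRad (Gkdn k δ n) := by
  classical
  have hδ1 : 1 ≤ δ := le_trans hk hkδ
  set A := adjMat (Gkdn k δ n) with hA
  have hspecrad : specRad (Gkdn k δ n) = sSup (spectrum ℝ A) := rfl
  set S := spectrum ℝ A with hS
  -- translation between mulVec eigen-equation and the `heig` form
  have htrans : ∀ (μ : ℝ) (x : Fin n → ℝ), A.mulVec x = μ • x ↔
      (∀ i : Fin n, μ * x i =
        (if (i:ℕ) < k then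
          (∑ j ∈ univ.filter (fun j : Fin n => (j:ℕ) < k), x j)
            + (∑ j ∈ univ.filter (fun j : Fin n => ¬(j:ℕ) < k ∧ (j:ℕ) ≤ δ), x j)
            + (∑ j ∈ univ.filter (fun j : Fin n => ¬(j:ℕ) ≤ δ), x j)
        else if (i:ℕ) ≤ δ then
          (∑ j ∈ univ.filter (fun j : Fin n => (j:ℕ) < k), x j)
            + (∑ j ∈ univ.filter (fun j : Fin n => ¬(j:ℕ) < k ∧ (j:ℕ) ≤ δ), x j)
        else
          (∑ j ∈ univ.filter (fun j : Fin n => (j:ℕ) < k), x j)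
            + (∑ j ∈ univ.filter (fun j : Fin n => ¬(j:ℕ) ≤ δ), x j)) - x i) := by
    intro μ x
    constructor
    · intro h i
      have h1 := congrFun h i
      rw [Pi.smul_apply, smul_eq_mul] at h1
      rw [← h1, hA, mulVec_Gkdn_aux hk hkδ hn]
    · intro h
      funext i
      rw [Pi.smul_apply, smul_eq_mul, h i, hA, mulVec_Gkdn_aux hk hkδ hn]
  have hmem_root : ∀ y : ℝ,
      (y^3 + (3-(n:ℝ))*y^2 + ((n:ℝ)*δ - (δ:ℝ)^2 - n - k*n + k + k*δ + 2 - 2*δ)*y +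
        ((k:ℝ)*n*δ + (k:ℝ)^2 + (n:ℝ)*δ + (k:ℝ)^2*δ - k*δ - (k:ℝ)^2*n - k*(δ:ℝ)^2 - 2*δ
          - (δ:ℝ)^2) = 0) → y ∈ S := by
    intro y hy
    obtain ⟨x, hx, heig⟩ := construct_aux hk hkδ hn y hy
    rw [hS, mem_spectrum_iff_eig_aux]
    exact ⟨x, hx, (htrans y x).mpr heig⟩
  have hclass : ∀ μ ∈ S, μ = -1 ∨
      (μ^3 + (3-(n:ℝ))*μ^2 + ((n:ℝ)*δ - (δ:ℝ)^2 - n - k*n + k + k*δ + 2 - 2*δ)*μ +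
        ((k:ℝ)*n*δ + (k:ℝ)^2 + (n:ℝ)*δ + (k:ℝ)^2*δ - k*δ - (k:ℝ)^2*n - k*(δ:ℝ)^2 - 2*δ
          - (δ:ℝ)^2) = 0) := by
    intro μ hμ
    rw [hS, mem_spectrum_iff_eig_aux] at hμ
    obtain ⟨x, hx, heig⟩ := hμ
    exact classify_aux hk hkδ hn μ x hx ((htrans μ x).mp heig)
  have hfin : S.Finite := by
    apply Set.Finite.subset (Set.Finite.insert (-1) (roots_finite_aux k δ n))
    intro μ hμ
    rcases hclass μ hμ with h | h
    · exact Set.mem_insert_iff.mpr (Or.inl h)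
    · exact Set.mem_insert_iff.mpr (Or.inr h)
  obtain ⟨r, hrδ, hr⟩ := exists_root_ge_aux hk hkδ hn
  have hrS : r ∈ S := hmem_root r hr
  have hne : S.Nonempty := ⟨r, hrS⟩
  have hbdd : BddAbove S := hfin.bddAbove
  have hsup_mem : sSup S ∈ S := hne.csSup_mem hfin
  have hr_le : r ≤ sSup S := le_csSup hbdd hrS
  have hδr : (1:ℝ) ≤ r := le_trans (by exact_mod_cast hδ1) hrδ
  constructor
  · rw [hspecrad]
    rcases hclass _ hsup_mem with h | h
    · exfalso; rw [h] at hr_le; linarith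
    · exact h
  · intro y hy
    rw [hspecrad]
    exact le_csSup hbdd (hmem_root y hy)
end
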